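/- arXiv:2005.07410 — 2 statements merged into one kernel-verified Lean document; each statement's English description precedes it below -/
import Mathlib

section
/- Alzer's inequality: for every real m > 1 and every z > 0, γ(m, z)/Γ(m) > (1 − exp(−c z))^m, where c = (Γ(m+1))^{−1/m} and γ(m,z) = ∫₀^z t^{m−1} e^{−t} dt is the lower incomplete Gamma function. -/
/-!
Put `c^m Γ(m+1) = 1` and `L(t) = log ((1 - e^{-t}) / t)`. The gap
`f(y) = (1 - e^{-cy})^m - γ(m,y)/Γ(m)` vanishes at `0` and at `∞`, and
`f'(y) = y^{m-1} e^{-y} / Γ(m) · (e^{R(y)} - 1)` with `R(y) = (m-1) L(cy) + (1-c) y`.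
Since `L` is strictly convex (`L'' > 0` amounts to `2 sinh (t/2) > t`) and `L(0) = 0`,
`R(y)/y` is strictly increasing, so `f'` changes sign at most once, from `-` to `+`.
A function vanishing at both ends with such a derivative is negative in between.
-/

open Real MeasureTheory Set Filter Topology

theorem lt_zero_of_deriv_single_crossing {f : ℝ → ℝ} {a z : ℝ} (hf : ContinuousOn f (Ici a))
    (hfa : f a = 0) (hlim : Tendsto f atTop (𝓝 0))
    (hcross : ∀ x y, a < x → x < y → 0 ≤ deriv f x → 0 < deriv f y) (hz : a < z) :
    f z < 0 := by
  by_cases hneg : ∀ x ∈ Ioo a z, deriv f x < 0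
  · have hanti : StrictAntiOn f (Icc a z) :=
      strictAntiOn_of_deriv_neg (convex_Icc a z) (hf.mono Icc_subset_Ici_self)
        (by rwa [interior_Icc])
    simpa [hfa] using hanti (left_mem_Icc.2 hz.le) (right_mem_Icc.2 hz.le) hz
  · push Not at hneg
    obtain ⟨x, ⟨hax, hxz⟩, hx⟩ := hneg
    have hmono : StrictMonoOn f (Ici x) :=
      strictMonoOn_of_deriv_pos (convex_Ici x) (hf.mono (Ici_subset_Ici.2 hax.le))
        (by rw [interior_Ici]; exact fun y hy => hcross x y hax hy hx)
    have hle : f (z + 1) ≤ 0 :=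
      ge_of_tendsto hlim (eventually_ge_atTop (z + 1) |>.mono fun u hu =>
        hmono.monotoneOn (mem_Ici.2 (by linarith)) (mem_Ici.2 (by linarith)) hu)
    linarith [hmono (mem_Ici.2 hxz.le) (mem_Ici.2 (by linarith)) (lt_add_one z)]

theorem sq_mul_exp_lt_sq_exp_sub_one {t : ℝ} (ht : 0 < t) : t ^ 2 * exp t < (exp t - 1) ^ 2 := by
  have hsinh : t < exp (t / 2) - exp (-(t / 2)) := by
    have := self_lt_sinh_iff.2 (half_pos ht)
    rw [sinh_eq] at this
    linarith
  have hmul : t * exp (t / 2) < exp t - 1 := by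
    have h := mul_lt_mul_of_pos_right hsinh (exp_pos (t / 2))
    rwa [sub_mul, ← exp_add, ← exp_add, add_halves, neg_add_cancel, exp_zero] at h
  calc t ^ 2 * exp t = (t * exp (t / 2)) ^ 2 := by rw [mul_pow, ← exp_nat_mul]; ring_nf
    _ < (exp t - 1) ^ 2 := pow_lt_pow_left₀ hmul (by positivity) two_ne_zero

theorem one_sub_exp_neg_pos {t : ℝ} (ht : 0 < t) : 0 < 1 - exp (-t) := by
  simpa using ht

noncomputable def logOneSubExpNegDiv (t : ℝ) : ℝ := log ((1 - exp (-t)) / t)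

-- The junk value `log (0 / 0) = 0` is also the limit at `0`.
@[simp]
theorem logOneSubExpNegDiv_zero : logOneSubExpNegDiv 0 = 0 := by
  simp [logOneSubExpNegDiv]

theorem logOneSubExpNegDiv_eq_sub {t : ℝ} (ht : 0 < t) :
    logOneSubExpNegDiv t = log (1 - exp (-t)) - log t :=
  log_div (one_sub_exp_neg_pos ht).ne' ht.ne'

theorem hasDerivAt_logOneSubExpNegDiv {t : ℝ} (ht : 0 < t) :
    HasDerivAt logOneSubExpNegDiv ((exp t - 1)⁻¹ - t⁻¹) t := by
  have hden : HasDerivAt (fun s => 1 - exp (-s)) (exp (-t)) t := by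
    simpa using ((hasDerivAt_neg t).exp).const_sub 1
  have h := (hden.log (one_sub_exp_neg_pos ht).ne').sub (hasDerivAt_log ht.ne')
  refine (h.congr_of_eventuallyEq ?_).congr_deriv ?_
  · filter_upwards [Ioi_mem_nhds ht] with s hs using logOneSubExpNegDiv_eq_sub hs
  · have hexp : exp t - 1 ≠ 0 := (sub_pos.2 (one_lt_exp_iff.2 ht)).ne'
    rw [exp_neg]
    field_simp

theorem continuousOn_logOneSubExpNegDiv : ContinuousOn logOneSubExpNegDiv (Ici 0) := by
  intro t ht
  rcases (mem_Ici.1 ht).eq_or_lt with rfl | ht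
  · rw [← continuousWithinAt_Ioi_iff_Ici, ContinuousWithinAt, logOneSubExpNegDiv_zero]
    have hslope := (((hasDerivAt_neg (0 : ℝ)).exp).const_sub 1).tendsto_slope_zero_right
    simp only [zero_add, neg_zero, exp_zero, sub_self, sub_zero, smul_eq_mul, one_mul,
      neg_neg] at hslope
    unfold logOneSubExpNegDiv
    simpa [Function.comp_def, ← div_eq_inv_mul] using
      (continuousAt_log one_ne_zero).tendsto.comp hslope
  · exact (hasDerivAt_logOneSubExpNegDiv ht).continuousAt.continuousWithinAt

theorem strictConvexOn_logOneSubExpNegDiv : StrictConvexOn ℝ (Ici 0) logOneSubExpNegDiv := by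
  refine strictConvexOn_of_deriv2_pos (convex_Ici 0) continuousOn_logOneSubExpNegDiv ?_
  rw [interior_Ici]
  intro t (ht : 0 < t)
  have hexp : 0 < exp t - 1 := sub_pos.2 (one_lt_exp_iff.2 ht)
  have hderiv : deriv logOneSubExpNegDiv =ᶠ[𝓝 t] fun s => (exp s - 1)⁻¹ - s⁻¹ := by
    filter_upwards [Ioi_mem_nhds ht] with s hs using (hasDerivAt_logOneSubExpNegDiv hs).deriv
  have h2 : HasDerivAt (fun s => (exp s - 1)⁻¹ - s⁻¹)
      ((t ^ 2)⁻¹ - exp t / (exp t - 1) ^ 2) t := by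
    have h := (((hasDerivAt_exp t).sub_const 1).inv hexp.ne').sub (hasDerivAt_inv ht.ne')
    exact h.congr_deriv (by ring)
  rw [Function.iterate_succ_apply, Function.iterate_one, hderiv.deriv_eq, h2.deriv, sub_pos,
    div_lt_iff₀ (by positivity), ← div_eq_inv_mul, lt_div_iff₀ (by positivity), mul_comm]
  exact sq_mul_exp_lt_sq_exp_sub_one ht

theorem strictMonoOn_logOneSubExpNegDiv_div_self :
    StrictMonoOn (fun t => logOneSubExpNegDiv t / t) (Ioi 0) := by
  intro s (hs : 0 < s) t (ht : 0 < t) hst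
  simpa using strictConvexOn_logOneSubExpNegDiv.secant_strict_mono
    self_mem_Ici (mem_Ici.2 hs.le) (mem_Ici.2 ht.le) hs.ne' ht.ne' hst

theorem hasDerivAt_integral_rpow_mul_exp_neg {m : ℝ} (hm : 1 ≤ m) (x : ℝ) :
    HasDerivAt (fun y => ∫ t in (0 : ℝ)..y, t ^ (m - 1) * exp (-t))
      (x ^ (m - 1) * exp (-x)) x :=
  have hcont : Continuous fun t : ℝ => t ^ (m - 1) * exp (-t) :=
    (continuous_rpow_const (sub_nonneg.2 hm)).mul (by fun_prop)
  intervalIntegral.integral_hasDerivAt_right (hcont.intervalIntegrable 0 x)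
    (hcont.stronglyMeasurableAtFilter _ _) hcont.continuousAt

theorem tendsto_integral_rpow_mul_exp_neg_atTop {m : ℝ} (hm : 0 < m) :
    Tendsto (fun y => ∫ t in (0 : ℝ)..y, t ^ (m - 1) * exp (-t)) atTop (𝓝 (Gamma m)) := by
  simp_rw [Gamma_eq_integral hm, mul_comm (exp _)]
  exact intervalIntegral_tendsto_integral_Ioi 0
    ((GammaIntegral_convergent hm).congr_fun (fun t _ => mul_comm _ _) measurableSet_Ioi)
    tendsto_id

theorem hasDerivAt_one_sub_exp_neg_mul_rpow {m : ℝ} (hm : 1 ≤ m) (b x : ℝ) :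
    HasDerivAt (fun y => (1 - exp (-(b * y))) ^ m)
      (m * (1 - exp (-(b * x))) ^ (m - 1) * (b * exp (-(b * x)))) x := by
  have hinner : HasDerivAt (fun y => 1 - exp (-(b * y))) (b * exp (-(b * x))) x := by
    simpa [mul_comm] using (((hasDerivAt_id x).const_mul b).neg.exp).const_sub 1
  exact (hasDerivAt_rpow_const (Or.inr hm)).comp x hinner

noncomputable def alzerExponent (m b x : ℝ) : ℝ :=
  (m - 1) * logOneSubExpNegDiv (b * x) + (1 - b) * x

theorem exp_alzerExponent {m b x : ℝ} (hm : 0 < m) (hb : 0 < b)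
    (hbm : b ^ m * Gamma (m + 1) = 1) (hx : 0 < x) :
    exp (alzerExponent m b x) = m * (1 - exp (-(b * x))) ^ (m - 1) * (b * exp (-(b * x))) /
      (x ^ (m - 1) * exp (-x) / Gamma m) := by
  have hA := one_sub_exp_neg_pos (mul_pos hb hx)
  have hΓ := Gamma_pos_of_pos hm
  have hbm' : b ^ (m - 1) * b * (m * Gamma m) = 1 := by
    rwa [← rpow_add_one hb.ne', sub_add_cancel, ← Gamma_add_one hm.ne']
  have hx' := (rpow_pos_of_pos hx (m - 1)).ne'
  have hb' := (rpow_pos_of_pos hb (m - 1)).ne'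
  rw [alzerExponent, logOneSubExpNegDiv, exp_add, mul_comm (m - 1),
    ← rpow_def_of_pos (div_pos hA (mul_pos hb hx)), div_rpow hA.le (mul_pos hb hx).le,
    mul_rpow hb.le hx.le, show (1 - b) * x = x + -(b * x) by ring, exp_add, exp_neg x]
  field_simp
  linear_combination -hbm'

theorem strictMonoOn_alzerExponent_div_self {m b : ℝ} (hm : 1 < m) (hb : 0 < b) :
    StrictMonoOn (fun x => alzerExponent m b x / x) (Ioi 0) := by
  intro x (hx : 0 < x) y (hy : 0 < y) hxy
  have h : logOneSubExpNegDiv (b * x) / (b * x) < logOneSubExpNegDiv (b * y) / (b * y) :=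
    strictMonoOn_logOneSubExpNegDiv_div_self (mul_pos hb hx) (mul_pos hb hy)
      (mul_lt_mul_of_pos_left hxy hb)
  have key : ∀ u, 0 < u → alzerExponent m b u / u =
      (m - 1) * b * (logOneSubExpNegDiv (b * u) / (b * u)) + (1 - b) := by
    intro u hu
    rw [alzerExponent]
    field_simp
  simp only [key x hx, key y hy]
  linarith [mul_lt_mul_of_pos_left h (mul_pos (sub_pos.2 hm) hb)]

noncomputable def alzerGap (m b y : ℝ) : ℝ :=
  (1 - exp (-(b * y))) ^ m - (∫ t in (0 : ℝ)..y, t ^ (m - 1) * exp (-t)) / Gamma m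

theorem alzerGap_zero {m : ℝ} (hm : 0 < m) (b : ℝ) : alzerGap m b 0 = 0 := by
  simp [alzerGap, zero_rpow hm.ne']

theorem continuous_alzerGap {m : ℝ} (hm : 1 ≤ m) (b : ℝ) : Continuous (alzerGap m b) :=
  ((continuous_rpow_const (by linarith)).comp (by fun_prop)).sub
    (continuous_iff_continuousAt.2 fun x =>
      (hasDerivAt_integral_rpow_mul_exp_neg hm x).continuousAt.div_const _)

theorem tendsto_alzerGap_atTop {m b : ℝ} (hm : 0 < m) (hb : 0 < b) :
    Tendsto (alzerGap m b) atTop (𝓝 0) := by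
  have hpow : Tendsto (fun y => (1 - exp (-(b * y))) ^ m) atTop (𝓝 1) := by
    have hexp : Tendsto (fun y => exp (-(b * y))) atTop (𝓝 0) :=
      tendsto_exp_atBot.comp (tendsto_neg_atTop_atBot.comp (tendsto_id.const_mul_atTop hb))
    simpa using (hexp.const_sub 1).rpow_const (Or.inl (by simp))
  have := hpow.sub ((tendsto_integral_rpow_mul_exp_neg_atTop hm).div_const (Gamma m))
  rwa [div_self (Gamma_pos_of_pos hm).ne', sub_self] at this

theorem hasDerivAt_alzerGap {m b x : ℝ} (hm : 1 < m) (hb : 0 < b)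
    (hbm : b ^ m * Gamma (m + 1) = 1) (hx : 0 < x) :
    HasDerivAt (alzerGap m b)
      (x ^ (m - 1) * exp (-x) / Gamma m * (exp (alzerExponent m b x) - 1)) x := by
  refine ((hasDerivAt_one_sub_exp_neg_mul_rpow hm.le b x).sub
    ((hasDerivAt_integral_rpow_mul_exp_neg hm.le x).div_const (Gamma m))).congr_deriv ?_
  have hQ : x ^ (m - 1) * exp (-x) / Gamma m ≠ 0 := by
    have := Gamma_pos_of_pos (zero_lt_one.trans hm)
    positivity
  rw [mul_sub, exp_alzerExponent (by linarith) hb hbm hx, mul_div_cancel₀ _ hQ, mul_one]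

theorem deriv_alzerGap_pos_of_nonneg {m b x y : ℝ} (hm : 1 < m) (hb : 0 < b)
    (hbm : b ^ m * Gamma (m + 1) = 1) (hx : 0 < x) (hxy : x < y)
    (hx' : 0 ≤ deriv (alzerGap m b) x) : 0 < deriv (alzerGap m b) y := by
  have hy : 0 < y := hx.trans hxy
  have hΓ : 0 < Gamma m := Gamma_pos_of_pos (by linarith)
  rw [(hasDerivAt_alzerGap hm hb hbm hx).deriv, mul_nonneg_iff_of_pos_left (by positivity),
    sub_nonneg, one_le_exp_iff] at hx'
  rw [(hasDerivAt_alzerGap hm hb hbm hy).deriv]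
  refine mul_pos (by positivity) (sub_pos.2 (one_lt_exp_iff.2 ?_))
  exact (div_pos_iff_of_pos_right hy).1 <|
    (div_nonneg hx' hx.le).trans_lt (strictMonoOn_alzerExponent_div_self hm hb hx hy hxy)

/-- Alzer's inequality: for `m > 1`, `z > 0` and `c = Γ(m+1)^{−1/m}`,
`γ(m,z)/Γ(m) > (1 − e^{−cz})^m` where `γ` is the lower incomplete Gamma function. -/
theorem alzer_inequality (m z : ℝ) (hm : 1 < m) (hz : 0 < z) :
    (∫ t in (0:ℝ)..z, t ^ (m - 1) * Real.exp (-t)) / Real.Gamma m >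
      (1 - Real.exp (-(Real.Gamma (m + 1) ^ (-(1 / m)) * z))) ^ m := by
  have hm0 : 0 < m := by linarith
  have hΓ : 0 < Gamma (m + 1) := Gamma_pos_of_pos (by linarith)
  set b := Gamma (m + 1) ^ (-(1 / m))
  have hb : 0 < b := rpow_pos_of_pos hΓ _
  have hbm : b ^ m * Gamma (m + 1) = 1 := by
    rw [← rpow_mul hΓ.le, neg_mul, one_div, inv_mul_cancel₀ hm0.ne', rpow_neg_one,
      inv_mul_cancel₀ hΓ.ne']
  rw [gt_iff_lt, ← sub_neg]
  change alzerGap m b z < 0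
  exact lt_zero_of_deriv_single_crossing (continuous_alzerGap hm.le b).continuousOn
    (alzerGap_zero hm0 b) (tendsto_alzerGap_atTop hm0 hb)
    (fun x y hx hxy => deriv_alzerGap_pos_of_nonneg hm hb hbm hx hxy) hz
end

section
/- Let I be a nonnegative random variable with Laplace transform L_I, let m = M − n₀ + 1 ≥ 2 be an integer, and s > 0. Then combining the Erlang CCDF with Alzer's inequality, 1 − E[γ(m, sI)]/Γ(m) ≤ Σ_{i=1}^{m} (−1)^{i+1} C(m,i) L_I(i · (Γ(m+1))^{−1/m} · s). -/
/-!
For integer shape `m = n + 1`, `γ(m, x) / Γ(m)` is the Erlang distribution function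
`P(x) = 1 - e^{-x} ∑_{k ≤ n} x^k / k!`. Alzer's inequality `(1 - e^{-cx})^m ≤ P(x)` with
`m! c^m = 1` is proved by studying the gap `f = P - (1 - e^{-cx})^m`: it vanishes at `0` and at
`∞`, and its derivative factors as `x^n e^{-x} / n! * (1 - e^{g(x)})` with `g` convex on `(0, ∞)`
and `g(x) ≤ (1 - c) x`. Hence `g` is positive on a final segment only, so `f` first increases and
then decreases, and stays nonnegative. Taking expectations and expanding `1 - (1 - e^{-csI})^m`
binomially turns the bound into the alternating sum of Laplace transforms.
-/

open MeasureTheory Real Set Filter Topology Finset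
open scoped Nat

noncomputable def expPartialSum (n : ℕ) (x : ℝ) : ℝ := ∑ k ∈ range n, x ^ k / k !

noncomputable def erlangCDF (m : ℕ) (x : ℝ) : ℝ := 1 - exp (-x) * expPartialSum m x

lemma expPartialSum_succ (n : ℕ) (x : ℝ) :
    expPartialSum (n + 1) x = expPartialSum n x + x ^ n / n ! :=
  sum_range_succ _ _

lemma hasDerivAt_expPartialSum (n : ℕ) (x : ℝ) :
    HasDerivAt (expPartialSum (n + 1)) (expPartialSum n x) x := by
  induction n with
  | zero =>
    have h : expPartialSum 1 = fun _ => 1 := by ext y; simp [expPartialSum]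
    rw [h]
    simpa [expPartialSum] using hasDerivAt_const x (1 : ℝ)
  | succ n ih =>
    rw [show expPartialSum (n + 2) = fun y => expPartialSum (n + 1) y + y ^ (n + 1) / (n + 1)! by
      ext y; exact expPartialSum_succ (n + 1) y]
    refine (ih.add ((hasDerivAt_pow (n + 1) x).div_const _)).congr_deriv ?_
    rw [expPartialSum_succ, Nat.factorial_succ, add_tsub_cancel_right]
    push_cast
    field_simp

lemma continuous_erlangCDF (m : ℕ) : Continuous (erlangCDF m) := by
  unfold erlangCDF expPartialSum
  fun_prop

lemma hasDerivAt_erlangCDF (n : ℕ) (x : ℝ) :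
    HasDerivAt (erlangCDF (n + 1)) (x ^ n * exp (-x) / n !) x := by
  refine ((((hasDerivAt_neg x).exp).mul (hasDerivAt_expPartialSum n x)).const_sub 1).congr_deriv ?_
  rw [expPartialSum_succ]
  ring

lemma erlangCDF_zero (n : ℕ) : erlangCDF (n + 1) 0 = 0 := by
  simp [erlangCDF, expPartialSum, sum_range_succ']

lemma erlangCDF_le_one (m : ℕ) {x : ℝ} (hx : 0 ≤ x) : erlangCDF m x ≤ 1 := by
  have : 0 ≤ expPartialSum m x := sum_nonneg fun k _ => by positivity
  have := mul_nonneg (exp_pos (-x)).le this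
  rw [erlangCDF]
  linarith

lemma tendsto_erlangCDF_atTop (m : ℕ) : Tendsto (erlangCDF m) atTop (𝓝 1) := by
  have h : Tendsto (fun x => ∑ k ∈ range m, x ^ k * exp (-x) / k !) atTop (𝓝 0) := by
    simpa using tendsto_finsetSum (range m) fun k _ =>
      (tendsto_pow_mul_exp_neg_atTop_nhds_zero k).div_const (k ! : ℝ)
  convert h.const_sub 1 using 2 with x
  · simp only [erlangCDF, expPartialSum, mul_sum]
    congr 1
    exact sum_congr rfl fun k _ => by ring
  · simp

lemma integral_pow_mul_exp_neg (n : ℕ) (x : ℝ) :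
    ∫ t in (0 : ℝ)..x, t ^ n * exp (-t) = n ! * erlangCDF (n + 1) x := by
  have h (t : ℝ) : HasDerivAt (fun y => n ! * erlangCDF (n + 1) y) (t ^ n * exp (-t)) t :=
    ((hasDerivAt_erlangCDF n t).const_mul (n ! : ℝ)).congr_deriv (by field_simp)
  rw [intervalIntegral.integral_eq_sub_of_hasDerivAt (fun t _ => h t)
    ((by fun_prop : Continuous fun t : ℝ => t ^ n * exp (-t)).intervalIntegrable _ _),
    erlangCDF_zero]
  simp

lemma one_sub_exp_neg_pos_s5 {y : ℝ} (hy : 0 < y) : 0 < 1 - exp (-y) := by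
  simpa using exp_lt_one_iff.2 (neg_lt_zero.2 hy)

lemma one_sub_exp_neg_nonneg {y : ℝ} (hy : 0 ≤ y) : 0 ≤ 1 - exp (-y) := by
  simpa using exp_le_one_iff.2 (neg_nonpos.2 hy)

lemma hasDerivAt_one_sub_exp_neg_mul (c x : ℝ) :
    HasDerivAt (fun y => 1 - exp (-(c * y))) (c * exp (-(c * x))) x :=
  (((hasDerivAt_id x).const_mul c).neg.exp.const_sub 1).congr_deriv (by simp; ring)

lemma sq_mul_exp_neg_le_one_sub_exp_neg_sq {y : ℝ} (hy : 0 ≤ y) :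
    y ^ 2 * exp (-y) ≤ (1 - exp (-y)) ^ 2 := by
  -- `y ≤ 2 sinh (y / 2)`, multiplied by `exp (-y / 2)`
  have hsinh : y / 2 ≤ sinh (y / 2) := self_le_sinh_iff.2 (by positivity)
  rw [sinh_eq] at hsinh
  have hhalf : exp (-(y / 2)) ^ 2 = exp (-y) := by rw [← exp_nat_mul]; ring_nf
  have hinv : exp (y / 2) * exp (-(y / 2)) = 1 := by rw [← exp_add]; simp
  have h : y * exp (-(y / 2)) ≤ 1 - exp (-y) := by
    nlinarith [mul_le_mul_of_nonneg_right hsinh (exp_pos (-(y / 2))).le]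
  calc y ^ 2 * exp (-y) = (y * exp (-(y / 2))) ^ 2 := by rw [mul_pow, hhalf]
    _ ≤ (1 - exp (-y)) ^ 2 := pow_le_pow_left₀ (by positivity) h 2

lemma monotoneOn_exp_neg_div_one_sub_exp_neg_sub_inv :
    MonotoneOn (fun y => exp (-y) / (1 - exp (-y)) - y⁻¹) (Ioi 0) := by
  have hderiv (y : ℝ) (hy : 0 < y) : HasDerivAt (fun y => exp (-y) / (1 - exp (-y)) - y⁻¹)
      ((y ^ 2)⁻¹ - exp (-y) / (1 - exp (-y)) ^ 2) y := by
    have he := (hasDerivAt_neg y).exp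
    refine ((he.div (he.const_sub 1) (one_sub_exp_neg_pos_s5 hy).ne').sub
      (hasDerivAt_inv hy.ne')).congr_deriv ?_
    field_simp [(one_sub_exp_neg_pos_s5 hy).ne']
    ring
  refine monotoneOn_of_deriv_nonneg (convex_Ioi 0)
    (fun y hy => (hderiv y hy).continuousAt.continuousWithinAt)
    (fun y hy => (hderiv y (interior_subset hy)).differentiableAt.differentiableWithinAt)
    fun y hy => ?_
  rw [interior_Ioi] at hy
  have hy : 0 < y := hy
  rw [(hderiv y hy).deriv, sub_nonneg, div_le_iff₀ (pow_pos (one_sub_exp_neg_pos_s5 hy) 2),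
    ← div_eq_inv_mul, le_div_iff₀ (by positivity), mul_comm]
  exact sq_mul_exp_neg_le_one_sub_exp_neg_sq hy.le

lemma ConvexOn.pos_of_pos_of_le {f : ℝ → ℝ} {K a b : ℝ} (hf : ConvexOn ℝ (Ioi 0) f)
    (hK : ∀ x > 0, f x ≤ K * x) (ha : 0 < a) (hab : a ≤ b) (hfa : 0 < f a) : 0 < f b := by
  by_contra! hfb
  -- `a` is a convex combination of `δ` and `b`, and `f δ ≤ K δ` vanishes as `δ → 0`
  have hbound : ∀ δ ∈ Ioo 0 a, f a ≤ (b - a) / (b - δ) * (K * δ) := by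
    rintro δ ⟨hδ, hδa⟩
    have hbδ : 0 < b - δ := by linarith
    have hcomb := hf.2 (mem_Ioi.2 hδ) (mem_Ioi.2 (ha.trans_le hab))
      (div_nonneg (sub_nonneg.2 hab) hbδ.le) (div_nonneg (sub_nonneg.2 hδa.le) hbδ.le)
      (by rw [← add_div, div_eq_one_iff_eq hbδ.ne']; ring)
    have ha_eq : ((b - a) / (b - δ)) • δ + ((a - δ) / (b - δ)) • b = a := by
      simp only [smul_eq_mul]; field_simp; ring
    rw [ha_eq, smul_eq_mul, smul_eq_mul] at hcomb
    have := mul_le_mul_of_nonneg_left (hK δ hδ) (div_nonneg (sub_nonneg.2 hab) hbδ.le)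
    nlinarith [div_nonneg (sub_nonneg.2 hδa.le) hbδ.le]
  have hlim : Tendsto (fun δ => (b - a) / (b - δ) * (K * δ)) (𝓝[>] 0) (𝓝 0) := by
    have hb : b - 0 ≠ 0 := by linarith
    have : ContinuousAt (fun δ => (b - a) / (b - δ) * (K * δ)) 0 := by fun_prop (disch := exact hb)
    simpa using this.tendsto.mono_left nhdsWithin_le_nhds
  exact hfa.not_ge (ge_of_tendsto hlim (eventually_of_mem (Ioo_mem_nhdsGT ha) hbound))

lemma nonneg_of_deriv_neg_imp_nonpos {f : ℝ → ℝ} (hf : Differentiable ℝ f) (h0 : f 0 = 0)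
    (hlim : Tendsto f atTop (𝓝 0))
    (hderiv : ∀ a b, 0 < a → a ≤ b → deriv f a < 0 → deriv f b ≤ 0) {x : ℝ} (hx : 0 ≤ x) :
    0 ≤ f x := by
  by_cases hdec : ∃ a ∈ Ioc 0 x, deriv f a < 0
  · obtain ⟨a, ⟨ha, hax⟩, hfa⟩ := hdec
    have hanti : AntitoneOn f (Ici x) :=
      antitoneOn_of_deriv_nonpos (convex_Ici x) hf.continuous.continuousOn
        hf.differentiableOn fun y hy => by
          rw [interior_Ici] at hy
          exact hderiv a y ha (hax.trans (le_of_lt hy)) hfa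
    exact le_of_tendsto hlim ((eventually_ge_atTop x).mono fun y hy =>
      hanti self_mem_Ici hy hy)
  · push Not at hdec
    have hmono : MonotoneOn f (Icc 0 x) :=
      monotoneOn_of_deriv_nonneg (convex_Icc 0 x) hf.continuous.continuousOn
        hf.differentiableOn fun y hy => by
          rw [interior_Icc] at hy
          exact hdec y ⟨hy.1, hy.2.le⟩
    simpa [h0] using hmono (left_mem_Icc.2 hx) (right_mem_Icc.2 hx) hx

/-- The logarithm of the ratio of the two terms of the derivative of
`erlangCDF (n + 1) x - (1 - exp (-(c * x))) ^ (n + 1)`, when `(n + 1)! * c ^ (n + 1) = 1`. -/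
noncomputable def alzerLogRatio (n : ℕ) (c x : ℝ) : ℝ :=
  (1 - c) * x + n * (log (1 - exp (-(c * x))) - log (c * x))

section alzerLogRatio

variable {n : ℕ} {c : ℝ}

lemma hasDerivAt_alzerLogRatio (hc : 0 < c) {x : ℝ} (hx : 0 < x) :
    HasDerivAt (alzerLogRatio n c)
      ((1 - c) + n * (c * (exp (-(c * x)) / (1 - exp (-(c * x))) - (c * x)⁻¹))) x := by
  have hcx : 0 < c * x := mul_pos hc hx
  have hlin : HasDerivAt (fun y => c * y) c x := by simpa using (hasDerivAt_id x).const_mul c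
  refine (((hasDerivAt_id x).const_mul (1 - c)).add
    ((((hasDerivAt_one_sub_exp_neg_mul c x).log (one_sub_exp_neg_pos_s5 hcx).ne').sub
      (hlin.log hcx.ne')).const_mul (n : ℝ))).congr_deriv ?_
  field_simp

lemma convexOn_alzerLogRatio (hc : 0 < c) : ConvexOn ℝ (Ioi 0) (alzerLogRatio n c) := by
  have hmono : MonotoneOn
      (fun x => (1 - c) + n * (c * (exp (-(c * x)) / (1 - exp (-(c * x))) - (c * x)⁻¹)))
      (Ioi 0) := by
    intro x hx y hy hxy
    have := monotoneOn_exp_neg_div_one_sub_exp_neg_sub_inv (mul_pos hc hx) (mul_pos hc hy)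
      (mul_le_mul_of_nonneg_left hxy hc.le)
    dsimp only at this ⊢
    gcongr
  refine MonotoneOn.convexOn_of_deriv (convex_Ioi 0)
    (fun x hx => (hasDerivAt_alzerLogRatio hc hx).continuousAt.continuousWithinAt)
    (fun x hx => (hasDerivAt_alzerLogRatio hc (interior_subset hx)).differentiableAt
      |>.differentiableWithinAt) ?_
  rw [interior_Ioi]
  exact hmono.congr fun x hx => ((hasDerivAt_alzerLogRatio hc hx).deriv).symm

lemma alzerLogRatio_le (hc : 0 < c) {x : ℝ} (hx : 0 < x) :
    alzerLogRatio n c x ≤ (1 - c) * x := by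
  have hcx : 0 < c * x := mul_pos hc hx
  have hlog : log (1 - exp (-(c * x))) ≤ log (c * x) :=
    log_le_log (one_sub_exp_neg_pos_s5 hcx) (by linarith [add_one_le_exp (-(c * x))])
  have : (n : ℝ) * (log (1 - exp (-(c * x))) - log (c * x)) ≤ 0 :=
    mul_nonpos_of_nonneg_of_nonpos n.cast_nonneg (sub_nonpos.2 hlog)
  rw [alzerLogRatio]
  linarith

lemma sub_eq_mul_one_sub_exp_alzerLogRatio (hc0 : 0 < c)
    (hc : ((n + 1)! : ℝ) * c ^ (n + 1) = 1) {x : ℝ} (hx : 0 < x) :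
    x ^ n * exp (-x) / (n ! : ℝ) - (n + 1) * (1 - exp (-(c * x))) ^ n * (c * exp (-(c * x))) =
      x ^ n * exp (-x) / n ! * (1 - exp (alzerLogRatio n c x)) := by
  have hcx : 0 < c * x := mul_pos hc0 hx
  have hexp : exp (alzerLogRatio n c x) =
      exp (-(c * x)) / exp (-x) * ((1 - exp (-(c * x))) / (c * x)) ^ n := by
    rw [alzerLogRatio, exp_add, exp_nat_mul, exp_sub, exp_log (one_sub_exp_neg_pos_s5 hcx),
      exp_log hcx, ← exp_sub]
    ring_nf
  rw [Nat.factorial_succ] at hc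
  push_cast at hc
  rw [hexp, div_pow, mul_pow]
  field_simp
  linear_combination (-(exp (-(x * c)) * (1 - exp (-(x * c))) ^ n)) * hc

end alzerLogRatio

theorem one_sub_exp_neg_mul_pow_le_erlangCDF {n : ℕ} {c : ℝ} (hc0 : 0 < c)
    (hc : ((n + 1)! : ℝ) * c ^ (n + 1) = 1) {x : ℝ} (hx : 0 ≤ x) :
    (1 - exp (-(c * x))) ^ (n + 1) ≤ erlangCDF (n + 1) x := by
  set f := fun y => erlangCDF (n + 1) y - (1 - exp (-(c * y))) ^ (n + 1)
  have hf (y : ℝ) : HasDerivAt f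
      (y ^ n * exp (-y) / (n ! : ℝ) - (n + 1) * (1 - exp (-(c * y))) ^ n * (c * exp (-(c * y))))
      y :=
    ((hasDerivAt_erlangCDF n y).sub ((hasDerivAt_one_sub_exp_neg_mul c y).pow (n + 1)))
      |>.congr_deriv (by push_cast; ring)
  have hneg_iff (y : ℝ) (hy : 0 < y) : deriv f y < 0 ↔ 0 < alzerLogRatio n c y := by
    rw [(hf y).deriv, sub_eq_mul_one_sub_exp_alzerLogRatio hc0 hc hy,
      ← smul_eq_mul, smul_neg_iff_of_pos_left (by positivity), sub_neg, one_lt_exp_iff]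
  have hsign (a b : ℝ) (ha : 0 < a) (hab : a ≤ b) (hfa : deriv f a < 0) : deriv f b ≤ 0 :=
    ((hneg_iff b (ha.trans_le hab)).2 <| (convexOn_alzerLogRatio hc0).pos_of_pos_of_le
      (fun y hy => alzerLogRatio_le hc0 hy) ha hab ((hneg_iff a ha).1 hfa)).le
  have hlim : Tendsto f atTop (𝓝 0) := by
    have hexp : Tendsto (fun y => exp (-(c * y))) atTop (𝓝 0) :=
      tendsto_exp_atBot.comp (tendsto_neg_atTop_atBot.comp (tendsto_id.const_mul_atTop hc0))
    simpa using (tendsto_erlangCDF_atTop (n + 1)).sub ((hexp.const_sub 1).pow (n + 1))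
  have := nonneg_of_deriv_neg_imp_nonpos (fun y => (hf y).differentiableAt)
    (by simp [f, erlangCDF_zero]) hlim hsign hx
  simpa [f, sub_nonneg] using this

lemma one_sub_one_sub_pow_eq_sum {R : Type*} [CommRing R] (m : ℕ) (u : R) :
    1 - (1 - u) ^ m = ∑ i ∈ Icc 1 m, (-1) ^ (i + 1) * (m.choose i : R) * u ^ i := by
  have hbinom : (1 - u) ^ m = ∑ i ∈ range (m + 1), (-1) ^ i * (m.choose i : R) * u ^ i := by
    rw [sub_eq_neg_add, add_pow]
    refine sum_congr rfl fun i _ => ?_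
    rw [neg_pow]
    ring
  rw [hbinom, sum_range_succ', ← Finset.Ico_add_one_right_eq_Icc, sum_Ico_eq_sum_range,
    add_tsub_cancel_right]
  simp only [pow_zero, Nat.choose_zero_right, Nat.cast_one, mul_one, add_comm 1]
  rw [sub_add_cancel_right, ← sum_neg_distrib]
  exact sum_congr rfl fun i _ => by ring

lemma integral_one_sub_one_sub_exp_neg_pow {Ω : Type*} [MeasurableSpace Ω] {μ : Measure Ω}
    [IsProbabilityMeasure μ] {X : Ω → ℝ} (hX : AEMeasurable X μ) (hX0 : ∀ᵐ ω ∂μ, 0 ≤ X ω)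
    (m : ℕ) :
    1 - ∫ ω, (1 - exp (-X ω)) ^ m ∂μ =
      ∑ i ∈ Icc 1 m, (-1) ^ (i + 1) * (m.choose i : ℝ) * ∫ ω, exp (-(i * X ω)) ∂μ := by
  have hint (i : ℕ) : Integrable (fun ω => exp (-(i * X ω))) μ := by
    refine .of_bound (by fun_prop) 1 (hX0.mono fun ω hω => ?_)
    rw [norm_of_nonneg (exp_pos _).le, exp_le_one_iff, neg_nonpos]
    positivity
  have hpow : Integrable (fun ω => (1 - exp (-X ω)) ^ m) μ := by
    refine .of_bound (by fun_prop) 1 (hX0.mono fun ω hω => ?_)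
    rw [norm_of_nonneg (pow_nonneg (one_sub_exp_neg_nonneg hω) m)]
    exact pow_le_one₀ (one_sub_exp_neg_nonneg hω) (by linarith [exp_pos (-X ω)])
  have hpt (ω : Ω) : 1 - (1 - exp (-X ω)) ^ m =
      ∑ i ∈ Icc 1 m, (-1) ^ (i + 1) * (m.choose i : ℝ) * exp (-(i * X ω)) := by
    have hexp (i : ℕ) : exp (-(i * X ω)) = exp (-X ω) ^ i := by rw [← exp_nat_mul]; ring_nf
    simp_rw [hexp]
    exact one_sub_one_sub_pow_eq_sum m _
  calc 1 - ∫ ω, (1 - exp (-X ω)) ^ m ∂μ = ∫ ω, (1 - (1 - exp (-X ω)) ^ m) ∂μ := by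
        rw [integral_sub (integrable_const 1) hpow, integral_const, probReal_univ, one_smul]
    _ = _ := by
        simp_rw [hpt]
        rw [integral_finsetSum _ fun i _ => (hint i).const_mul _]
        simp_rw [integral_const_mul]

lemma integral_one_sub_exp_neg_mul_pow_le_integral_erlangCDF {Ω : Type*} [MeasurableSpace Ω]
    {μ : Measure Ω} [IsProbabilityMeasure μ] {X : Ω → ℝ} (hX : AEMeasurable X μ)
    (hX0 : ∀ᵐ ω ∂μ, 0 ≤ X ω) {n : ℕ} {c : ℝ} (hc0 : 0 < c)
    (hc : ((n + 1)! : ℝ) * c ^ (n + 1) = 1) :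
    ∫ ω, (1 - exp (-(c * X ω))) ^ (n + 1) ∂μ ≤ ∫ ω, erlangCDF (n + 1) (X ω) ∂μ := by
  have hle := hX0.mono fun ω hω => one_sub_exp_neg_mul_pow_le_erlangCDF hc0 hc hω
  have hnonneg := hX0.mono fun ω hω =>
    pow_nonneg (one_sub_exp_neg_nonneg (mul_nonneg hc0.le hω)) (n + 1)
  refine integral_mono_of_nonneg hnonneg (.of_bound
    ((continuous_erlangCDF _).measurable.comp_aemeasurable hX).aestronglyMeasurable 1 ?_) hle
  filter_upwards [hX0, hle, hnonneg] with ω hω hleω hnonnegω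
  rw [norm_of_nonneg (hnonnegω.trans hleω)]
  exact erlangCDF_le_one _ hω

lemma natCast_factorial_mul_Gamma_rpow_neg_inv_pow {m : ℕ} (hm : m ≠ 0) :
    (m ! : ℝ) * (Gamma ((m : ℝ) + 1) ^ (-(1 / (m : ℝ)))) ^ m = 1 := by
  rw [Gamma_nat_eq_factorial, rpow_neg (by positivity), inv_pow, one_div,
    rpow_inv_natCast_pow (by positivity) hm, mul_inv_cancel₀ (by positivity)]

theorem upper_bound_success_probability_general
    {Ω : Type*} [MeasurableSpace Ω] (μ : Measure Ω) [IsProbabilityMeasure μ]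
    (I : Ω → ℝ) (hIm : Measurable I) (hI0 : ∀ᵐ ω ∂μ, 0 ≤ I ω)
    (m : ℕ) (hm2 : 2 ≤ m)
    (s : ℝ) (hs : 0 < s) :
    1 - (∫ ω, (∫ t in (0:ℝ)..(s * I ω), t ^ ((m : ℝ) - 1) * Real.exp (-t)) ∂μ)
          / Real.Gamma m ≤
      ∑ i ∈ Finset.Icc 1 m, (-1 : ℝ) ^ (i + 1) * (m.choose i : ℝ) *
        ∫ ω, Real.exp
          (-((i : ℝ) * Real.Gamma ((m : ℝ) + 1) ^ (-(1 / (m : ℝ))) * s * I ω)) ∂μ := by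
  obtain ⟨n, rfl⟩ : ∃ n, m = n + 1 := ⟨m - 1, by omega⟩
  set c := Gamma (((n + 1 : ℕ) : ℝ) + 1) ^ (-(1 / ((n + 1 : ℕ) : ℝ)))
  have hc0 : 0 < c := rpow_pos_of_pos (Gamma_pos_of_pos (by positivity)) _
  have hc : ((n + 1)! : ℝ) * c ^ (n + 1) = 1 :=
    natCast_factorial_mul_Gamma_rpow_neg_inv_pow n.succ_ne_zero
  have hX0 : ∀ᵐ ω ∂μ, 0 ≤ s * I ω := hI0.mono fun ω hω => mul_nonneg hs.le hω
  have hLHS : (∫ ω, (∫ t in (0 : ℝ)..(s * I ω), t ^ (((n + 1 : ℕ) : ℝ) - 1) * exp (-t)) ∂μ)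
      / Gamma ((n + 1 : ℕ) : ℝ) = ∫ ω, erlangCDF (n + 1) (s * I ω) ∂μ := by
    simp_rw [Nat.cast_add_one, add_sub_cancel_right, rpow_natCast, integral_pow_mul_exp_neg,
      integral_const_mul, Gamma_nat_eq_factorial]
    field_simp
  have halzer := integral_one_sub_exp_neg_mul_pow_le_integral_erlangCDF (by fun_prop) hX0 hc0 hc
  have hlaplace := integral_one_sub_one_sub_exp_neg_pow (X := fun ω => c * (s * I ω))
    (by fun_prop) (hX0.mono fun ω hω => mul_nonneg hc0.le hω) (n + 1)
  simp only [mul_assoc] at hlaplace ⊢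
  rw [hLHS, ← hlaplace]
  linarith

/-- Combining the Erlang CCDF with Alzer's inequality: for a nonnegative random
variable `I`, integer `m = M − n₀ + 1 ≥ 2` and `s > 0`,
`1 − E[γ(m,sI)]/Γ(m) ≤ Σ_{i=1}^{m} (−1)^{i+1} C(m,i) L_I(i Γ(m+1)^{−1/m} s)`. -/
theorem upper_bound_success_probability
    {Ω : Type*} [MeasurableSpace Ω] (μ : Measure Ω) [IsProbabilityMeasure μ]
    (I : Ω → ℝ) (hIm : Measurable I) (hI0 : ∀ᵐ ω ∂μ, 0 ≤ I ω)
    (hIpos : 0 < μ {ω | 0 < I ω})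
    (M n₀ : ℕ) (m : ℕ) (hmdef : m = M - n₀ + 1) (hm2 : 2 ≤ m)
    (s : ℝ) (hs : 0 < s) :
    1 - (∫ ω, (∫ t in (0:ℝ)..(s * I ω), t ^ ((m : ℝ) - 1) * Real.exp (-t)) ∂μ)
          / Real.Gamma m ≤
      ∑ i ∈ Finset.Icc 1 m, (-1 : ℝ) ^ (i + 1) * (m.choose i : ℝ) *
        ∫ ω, Real.exp
          (-((i : ℝ) * Real.Gamma ((m : ℝ) + 1) ^ (-(1 / (m : ℝ))) * s * I ω)) ∂μ :=
  upper_bound_success_probability_general μ I hIm hI0 m hm2 s hs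
end
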